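/- arXiv:2007.01002 — 2 statements merged into one kernel-verified Lean document; each statement's English description precedes it below -/
import Mathlib

section
/- Let d ≥ 1 and let L : ℝ^d → ℝ be continuously differentiable. Fix x ∈ ℝ^d. For δ > 0 define the expected two-point zero-order gradient estimator ĝ(δ) = ∫_{S^{d−1}} (d/(2δ))·(L(x + δ·v) − L(x − δ·v)) · v dσ(v). Then ĝ(δ) converges to the gradient ∇L(x) as δ → 0⁺; i.e., the two-point zero-order gradient estimator with direction v drawn uniformly from the unit sphere is unbiased in the limit δ → 0 (Proposition 1). -/
open MeasureTheory Filter Topology Metric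

/-!
By the mean value inequality and the continuity of `fderiv ℝ L` at `x`, the central difference
quotient `(L (x + δ v) - L (x - δ v)) / (2 δ)` converges to `⟪∇L x, v⟫` uniformly on the unit
sphere, so the estimator converges to `d ∫ ⟪∇L x, v⟫ v dσ`. Invariance of `σ` under coordinate
sign changes and permutations makes the second-moment matrix `∫ v vᵀ dσ` a multiple of the
identity, and its trace is `∫ ‖v‖² dσ = 1`, so `∫ ⟪g, v⟫ v dσ = g / d`.
-/

section CentralDifference

variable {E F : Type*} [NormedAddCommGroup E] [NormedSpace ℝ E]
  [NormedAddCommGroup F] [NormedSpace ℝ F]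

theorem norm_sub_sub_two_smul_fderiv_le {L : E → F} {x h : E} {ε : ℝ}
    (hdiff : ∀ y ∈ closedBall x ‖h‖, DifferentiableAt ℝ L y)
    (hε : ∀ y ∈ closedBall x ‖h‖, ‖fderiv ℝ L y - fderiv ℝ L x‖ ≤ ε) :
    ‖L (x + h) - L (x - h) - (2 : ℝ) • fderiv ℝ L x h‖ ≤ ε * (2 * ‖h‖) := by
  have hplus : x + h ∈ closedBall x ‖h‖ := by simp
  have hminus : x - h ∈ closedBall x ‖h‖ := by simp
  have hdiam : x + h - (x - h) = (2 : ℝ) • h := by module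
  simpa [hdiam, norm_smul] using
    (convex_closedBall x ‖h‖).norm_image_sub_le_of_norm_fderiv_le' hdiff hε hminus hplus

theorem tendstoUniformlyOn_centralDiffQuot {L : E → F} {x : E}
    (hdiff : ∀ᶠ y in 𝓝 x, DifferentiableAt ℝ L y) (hcont : ContinuousAt (fderiv ℝ L) x)
    {s : Set E} (hs : Bornology.IsBounded s) :
    TendstoUniformlyOn (fun (δ : ℝ) v => (2 * δ)⁻¹ • (L (x + δ • v) - L (x - δ • v)))
      (fun v => fderiv ℝ L x v) (𝓝[>] (0 : ℝ)) s := by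
  obtain ⟨R, hR, hsR⟩ := hs.subset_closedBall_lt 0 0
  rw [Metric.tendstoUniformlyOn_iff]
  intro ε hε
  set η := ε / (2 * R)
  have hη : 0 < η := by positivity
  obtain ⟨r, hr, hball⟩ := Metric.eventually_nhds_iff_ball.1
    (hdiff.and (hcont.eventually (closedBall_mem_nhds _ hη)))
  filter_upwards [Ioo_mem_nhdsGT (show 0 < r / R by positivity)] with δ ⟨hδ, hδr⟩ v hv
  have hvR : ‖v‖ ≤ R := by simpa using hsR hv
  have hstep : ‖δ • v‖ < r := by
    rw [norm_smul, Real.norm_of_nonneg hδ.le]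
    calc δ * ‖v‖ ≤ δ * R := by gcongr
      _ < r := by rwa [lt_div_iff₀ hR] at hδr
  have hnear : ∀ y ∈ closedBall x ‖δ • v‖, DifferentiableAt ℝ L y ∧
      ‖fderiv ℝ L y - fderiv ℝ L x‖ ≤ η := fun y hy =>
    by simpa [dist_eq_norm] using hball y (closedBall_subset_ball hstep hy)
  have hmvt := norm_sub_sub_two_smul_fderiv_le (fun y hy => (hnear y hy).1)
    (fun y hy => (hnear y hy).2)
  rw [dist_eq_norm']
  calc ‖(2 * δ)⁻¹ • (L (x + δ • v) - L (x - δ • v)) - fderiv ℝ L x v‖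
      = (2 * δ)⁻¹ * ‖L (x + δ • v) - L (x - δ • v) - (2 : ℝ) • fderiv ℝ L x (δ • v)‖ := by
        have hquot : (2 * δ)⁻¹ • (L (x + δ • v) - L (x - δ • v)) - fderiv ℝ L x v =
            (2 * δ)⁻¹ • (L (x + δ • v) - L (x - δ • v) - (2 : ℝ) • fderiv ℝ L x (δ • v)) := by
          rw [map_smul, smul_smul, smul_sub _ (_ - _), smul_smul,
            show (2 * δ)⁻¹ * (2 * δ) = 1 by field_simp, one_smul]
        rw [hquot, norm_smul, Real.norm_of_nonneg (by positivity)]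
    _ ≤ (2 * δ)⁻¹ * (η * (2 * ‖δ • v‖)) := by gcongr
    _ = η * ‖v‖ := by
        rw [norm_smul, Real.norm_of_nonneg hδ.le]; field_simp
    _ ≤ η * R := by gcongr
    _ < ε := by
        rw [div_mul_eq_mul_div, div_lt_iff₀ (by positivity)]
        nlinarith

end CentralDifference

theorem TendstoUniformlyOn.smul_of_norm_le {ι α 𝕜 E : Type*} [NormedField 𝕜]
    [NormedAddCommGroup E] [NormedSpace 𝕜 E] {f : ι → α → 𝕜} {g : α → 𝕜} {h : α → E}
    {l : Filter ι} {s : Set α} {C : ℝ} (hf : TendstoUniformlyOn f g l s)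
    (hh : ∀ a ∈ s, ‖h a‖ ≤ C) :
    TendstoUniformlyOn (fun i a => f i a • h a) (fun a => g a • h a) l s := by
  rw [Metric.tendstoUniformlyOn_iff] at hf ⊢
  intro ε hε
  filter_upwards [hf (ε / (|C| + 1)) (by positivity)] with i hi a ha
  calc dist (g a • h a) (f i a • h a) = dist (g a) (f i a) * ‖h a‖ := by
        rw [dist_eq_norm, dist_eq_norm, ← sub_smul, norm_smul]
    _ ≤ ε / (|C| + 1) * |C| := by
        gcongr
        · exact (hi a ha).le
        · exact (hh a ha).trans (le_abs_self C)
    _ < ε := by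
        rw [div_mul_eq_mul_div, div_lt_iff₀ (by positivity)]
        nlinarith

theorem TendstoUniformlyOn.tendsto_integral_of_ae_mem {ι α E : Type*} [MeasurableSpace α]
    [NormedAddCommGroup E] [NormedSpace ℝ E] {μ : Measure α} [IsFiniteMeasure μ]
    {F : ι → α → E} {f : α → E} {l : Filter ι} {s : Set α}
    (h : TendstoUniformlyOn F f l s) (hs : ∀ᵐ a ∂μ, a ∈ s)
    (hF : ∀ᶠ i in l, AEStronglyMeasurable (F i) μ) (hf : Integrable f μ) :
    Tendsto (fun i => ∫ a, F i a ∂μ) l (𝓝 (∫ a, f a ∂μ)) := by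
  rw [Metric.tendsto_nhds]
  intro ε hε
  set η := ε / (μ.real Set.univ + 1)
  filter_upwards [Metric.tendstoUniformlyOn_iff.1 h η (by positivity), hF] with i hi hFi
  have hclose : ∀ᵐ a ∂μ, ‖F i a - f a‖ ≤ η :=
    hs.mono fun a ha => by rw [← dist_eq_norm, dist_comm]; exact (hi a ha).le
  have hFint : Integrable (F i) μ := by
    simpa using (Integrable.of_bound (hFi.sub hf.1) η hclose).add hf
  rw [dist_eq_norm, ← integral_sub hFint hf]
  calc ‖∫ a, F i a - f a ∂μ‖ ≤ η * μ.real Set.univ := norm_integral_le_of_norm_le_const hclose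
    _ < ε := by
        rw [div_mul_eq_mul_div, div_lt_iff₀ (by positivity)]
        nlinarith

theorem LinearIsometryEquiv.integral_comp_of_map_eq {E G : Type*} [NormedAddCommGroup E]
    [NormedSpace ℝ E] [MeasurableSpace E] [BorelSpace E] [NormedAddCommGroup G]
    [NormedSpace ℝ G] {μ : Measure E} {T : E ≃ₗᵢ[ℝ] E} (hT : μ.map T = μ) (f : E → G) :
    ∫ v, f (T v) ∂μ = ∫ v, f v ∂μ :=
  MeasurePreserving.integral_comp ⟨T.continuous.measurable, hT⟩
    T.toHomeomorph.measurableEmbedding f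

theorem integrable_inner_smul_self {E : Type*} [NormedAddCommGroup E] [InnerProductSpace ℝ E]
    [SecondCountableTopology E] [MeasurableSpace E] [OpensMeasurableSpace E] {μ : Measure E}
    [IsFiniteMeasure μ] (hμ : ∀ᵐ v ∂μ, ‖v‖ = 1) (g : E) :
    Integrable (fun v => inner ℝ g v • v) μ := by
  refine Integrable.of_bound (by fun_prop : Continuous _).aestronglyMeasurable ‖g‖
    (hμ.mono fun v hv => ?_)
  calc ‖inner ℝ g v • v‖ ≤ ‖g‖ * ‖v‖ * ‖v‖ := by
        rw [norm_smul]; gcongr; exact norm_inner_le_norm g v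
    _ = ‖g‖ := by rw [hv, mul_one, mul_one]

namespace EuclideanSpace

variable {d : ℕ} {σ : Measure (EuclideanSpace ℝ (Fin d))}

theorem integral_coord_mul_coord_of_ne
    (hσ_inv : ∀ T : EuclideanSpace ℝ (Fin d) ≃ₗᵢ[ℝ] EuclideanSpace ℝ (Fin d), σ.map T = σ)
    {i j : Fin d} (hij : i ≠ j) : ∫ v, v i * v j ∂σ = 0 := by
  let flip : EuclideanSpace ℝ (Fin d) ≃ₗᵢ[ℝ] EuclideanSpace ℝ (Fin d) :=
    LinearIsometryEquiv.piLpCongrRight 2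
      (Function.update (fun _ => LinearIsometryEquiv.refl ℝ ℝ) i (LinearIsometryEquiv.neg ℝ))
  have hflip := LinearIsometryEquiv.integral_comp_of_map_eq (hσ_inv flip) fun v => v i * v j
  simp only [flip, LinearIsometryEquiv.piLpCongrRight_apply, Function.update_self,
    Function.update_of_ne hij.symm, LinearIsometryEquiv.coe_neg,
    LinearIsometryEquiv.coe_refl, id, neg_mul, integral_neg] at hflip
  linarith

theorem integral_coord_mul_self_eq
    (hσ_inv : ∀ T : EuclideanSpace ℝ (Fin d) ≃ₗᵢ[ℝ] EuclideanSpace ℝ (Fin d), σ.map T = σ)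
    (i j : Fin d) : ∫ v, v i * v i ∂σ = ∫ v, v j * v j ∂σ := by
  have hswap := LinearIsometryEquiv.integral_comp_of_map_eq
    (hσ_inv (LinearIsometryEquiv.piLpCongrLeft 2 ℝ ℝ (Equiv.swap i j))) fun v => v j * v j
  simpa [LinearIsometryEquiv.piLpCongrLeft_apply, Equiv.piCongrLeft'_apply] using hswap

theorem integrable_coord_mul_coord [IsFiniteMeasure σ] (hσ_sphere : ∀ᵐ v ∂σ, ‖v‖ = 1)
    (i j : Fin d) : Integrable (fun v : EuclideanSpace ℝ (Fin d) => v i * v j) σ := by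
  refine Integrable.of_bound (by fun_prop) 1 (hσ_sphere.mono fun v hv => ?_)
  rw [norm_mul, ← mul_one (1 : ℝ)]
  gcongr <;> exact hv ▸ PiLp.norm_apply_le v _

theorem sum_integral_coord_mul_self [IsProbabilityMeasure σ]
    (hσ_sphere : ∀ᵐ v ∂σ, ‖v‖ = 1) : ∑ i, ∫ v, v i * v i ∂σ = 1 := by
  rw [← integral_finsetSum _ fun i _ => integrable_coord_mul_coord hσ_sphere i i]
  refine integral_eq_const (hσ_sphere.mono fun v hv => ?_)
  simpa [← sq, hv] using (EuclideanSpace.norm_sq_eq v).symm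

theorem integral_coord_mul_coord [IsProbabilityMeasure σ] (hσ_sphere : ∀ᵐ v ∂σ, ‖v‖ = 1)
    (hσ_inv : ∀ T : EuclideanSpace ℝ (Fin d) ≃ₗᵢ[ℝ] EuclideanSpace ℝ (Fin d), σ.map T = σ)
    (i j : Fin d) : ∫ v, v i * v j ∂σ = if i = j then (d : ℝ)⁻¹ else 0 := by
  split_ifs with hij
  · subst hij
    have htrace := sum_integral_coord_mul_self hσ_sphere
    simp only [integral_coord_mul_self_eq hσ_inv _ i, Finset.sum_const, Finset.card_univ,
      Fintype.card_fin, nsmul_eq_mul] at htrace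
    exact eq_inv_of_mul_eq_one_right htrace
  · exact integral_coord_mul_coord_of_ne hσ_inv hij

theorem integral_inner_smul_self [IsProbabilityMeasure σ] (hσ_sphere : ∀ᵐ v ∂σ, ‖v‖ = 1)
    (hσ_inv : ∀ T : EuclideanSpace ℝ (Fin d) ≃ₗᵢ[ℝ] EuclideanSpace ℝ (Fin d), σ.map T = σ)
    (g : EuclideanSpace ℝ (Fin d)) : ∫ v, inner ℝ g v • v ∂σ = (d : ℝ)⁻¹ • g := by
  ext i
  change EuclideanSpace.proj (𝕜 := ℝ) i _ = _
  rw [← (EuclideanSpace.proj i).integral_comp_comm (integrable_inner_smul_self hσ_sphere g)]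
  simp only [map_smul, PiLp.proj_apply, PiLp.smul_apply, smul_eq_mul, PiLp.inner_apply,
    RCLike.inner_apply, Real.ringHom_apply]
  calc ∫ v, (∑ j, v j * g j) * v i ∂σ = ∫ v, ∑ j, g j * (v j * v i) ∂σ := by
        simp_rw [Finset.sum_mul, mul_comm (g _), mul_right_comm]
    _ = ∑ j, g j * ∫ v, v j * v i ∂σ := by
        rw [integral_finsetSum _ fun j _ => (integrable_coord_mul_coord hσ_sphere j i).const_mul _]
        simp_rw [integral_const_mul]
    _ = (d : ℝ)⁻¹ * g i := by
        simp [integral_coord_mul_coord hσ_sphere hσ_inv, mul_comm]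

end EuclideanSpace

/-- **Proposition 1 (unbiasedness of the two-point zero-order gradient estimator).**
Let `σ` be the uniform (rotation-invariant) Borel probability measure on the unit sphere
of `ℝ^d` and let `L : ℝ^d → ℝ` be continuously differentiable. Then the expected
two-point zero-order gradient estimator
`ĝ(δ) = ∫ (d/(2δ)) (L(x + δv) - L(x - δv)) v dσ(v)`
converges to the gradient `∇L(x)` as `δ → 0⁺`. -/
theorem two_point_zero_order_estimator_unbiased
    (d : ℕ) (hd : 1 ≤ d)
    (σ : Measure (EuclideanSpace ℝ (Fin d))) [IsProbabilityMeasure σ]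
    (hσ_sphere : ∀ᵐ v ∂σ, ‖v‖ = 1)
    (hσ_inv : ∀ T : EuclideanSpace ℝ (Fin d) ≃ₗᵢ[ℝ] EuclideanSpace ℝ (Fin d),
      Measure.map T σ = σ)
    (L : EuclideanSpace ℝ (Fin d) → ℝ) (hL : ContDiff ℝ 1 L)
    (x : EuclideanSpace ℝ (Fin d)) :
    Filter.Tendsto
      (fun δ : ℝ =>
        ∫ v, ((d : ℝ) / (2 * δ)) • ((L (x + δ • v) - L (x - δ • v)) • v) ∂σ)
      (nhdsWithin 0 (Set.Ioi 0)) (nhds (gradient L x)) := by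
  have hLdiff : Differentiable ℝ L := hL.differentiable one_ne_zero
  have hquot := tendstoUniformlyOn_centralDiffQuot (x := x) (.of_forall hLdiff)
    (hL.continuous_fderiv one_ne_zero).continuousAt (isBounded_sphere (x := 0) (r := 1))
  have hunif := hquot.smul_of_norm_le (h := fun v => (d : ℝ) • v) (C := d) fun v hv => by
    simp_all [norm_smul]
  have hφ : ∀ v, fderiv ℝ L x v = inner ℝ (gradient L x) v := fun v =>
    InnerProductSpace.toDual_symm_apply.symm
  have hlimit : ∫ v, fderiv ℝ L x v • (d : ℝ) • v ∂σ = gradient L x := by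
    have hd' : (d : ℝ) ≠ 0 := by exact_mod_cast Nat.one_le_iff_ne_zero.1 hd
    simp_rw [hφ, smul_comm _ (d : ℝ), integral_smul,
      EuclideanSpace.integral_inner_smul_self hσ_sphere hσ_inv, smul_inv_smul₀ hd']
  have hintegrand : ∀ (δ : ℝ) v, ((d : ℝ) / (2 * δ)) • ((L (x + δ • v) - L (x - δ • v)) • v) =
      ((2 * δ)⁻¹ • (L (x + δ • v) - L (x - δ • v))) • (d : ℝ) • v := fun δ v => by
    module
  simp_rw [hintegrand, ← hlimit]
  refine hunif.tendsto_integral_of_ae_mem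
    (hσ_sphere.mono fun v hv => mem_sphere_zero_iff_norm.2 hv)
    (.of_forall fun δ => (by fun_prop : Continuous _).aestronglyMeasurable) ?_
  simp_rw [hφ, smul_comm _ (d : ℝ)]
  exact (integrable_inner_smul_self hσ_sphere _).smul (d : ℝ)
end

section
/- Let n ≥ 1, let K ⊆ ℝ^n be a compact set, let p : ℝ^n → ℝ be a continuous nonnegative density on K (∫_K p(x) dx = 1), and let f* : ℝ^n → ℝ be bounded on K and continuous at every point of K except on a set of Lebesgue measure zero. Then for every ε > 0 there exists n_ε ∈ ℕ such that for every integer n' ≥ n_ε there exist weights a_1, …, a_{n'} ∈ ℝ^n and scalars b_1, …, b_{n'}, c_0, c_1, …, c_{n'} ∈ ℝ such that the one-hidden-layer ReLU network f(x) = c_0 + Σ_{i=1}^{n'} c_i · ReLU(⟨a_i, x⟩ + b_i) satisfies ∫_K (f*(x) − f(x))² · p(x) dx < ε. In particular, a ReLU neural network with sufficiently many neurons can approximate the almost-everywhere-continuous target mapping arbitrarily well in expected squared error (Theorem 2). -/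
/-!
One-hidden-layer ReLU networks on a real inner product space form a linear space of continuous
functions. On the line they contain every piecewise-linear interpolant, so they approximate
continuous functions uniformly on compact sets; composed with `x ↦ ⟪a, x⟫` they then approximate
every ridge function, in particular `x ↦ exp ⟪a, x⟫`. These exponential ridges span an algebra,
as `exp ⟪a, x⟫ * exp ⟪b, x⟫ = exp ⟪a + b, x⟫`, and it separates points, so by Stone–Weierstrass
networks are uniformly dense on every compact set `K`.

The target `f*` is bounded on `K` and continuous almost everywhere, hence lies in `L²` of the
finite measure `p(x) dx` on `K`. There it is approximated by a continuous function, which in turn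
is uniformly approximated on `K` by a network.
-/

open MeasureTheory Set

section ReLUNetworks

variable {E : Type*} [NormedAddCommGroup E] [InnerProductSpace ℝ E]

def reluNeuron (a : E) (b : ℝ) : C(E, ℝ) :=
  ⟨fun x => max (inner ℝ a x + b) 0, by fun_prop⟩

@[simp]
lemma reluNeuron_apply (a : E) (b : ℝ) (x : E) :
    reluNeuron a b x = max (inner ℝ a x + b) 0 := rfl

variable (E) in
def reluNetworks : Submodule ℝ C(E, ℝ) :=
  Submodule.span ℝ (range fun ab : E × ℝ => reluNeuron ab.1 ab.2)

lemma reluNeuron_mem_reluNetworks (a : E) (b : ℝ) : reluNeuron a b ∈ reluNetworks E :=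
  Submodule.subset_span ⟨(a, b), rfl⟩

lemma one_mem_reluNetworks : (1 : C(E, ℝ)) ∈ reluNetworks E := by
  convert reluNeuron_mem_reluNetworks (0 : E) 1
  ext x
  simp

lemma comp_inner_mem_reluNetworks {g : C(ℝ, ℝ)} (hg : g ∈ reluNetworks ℝ) (a : E) :
    g.comp ⟨fun x => inner ℝ a x, by fun_prop⟩ ∈ reluNetworks E := by
  let ridge := ContinuousMap.compRightAlgHom ℝ ℝ (⟨fun x => inner ℝ a x, by fun_prop⟩ : C(E, ℝ))
  suffices reluNetworks ℝ ≤ (reluNetworks E).comap ridge.toLinearMap from this hg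
  refine Submodule.span_le.mpr ?_
  rintro _ ⟨⟨c, b⟩, rfl⟩
  show (reluNeuron c b).comp _ ∈ reluNetworks E
  convert reluNeuron_mem_reluNetworks (c • a) b using 1
  ext x
  simp [real_inner_smul_left, mul_comm]

lemma exists_eq_sum_reluNeuron {f : C(E, ℝ)} (hf : f ∈ reluNetworks E) :
    ∃ m, ∀ n ≥ m, ∃ (a : Fin n → E) (b c : Fin n → ℝ),
      ∀ x, f x = ∑ i, c i * max (inner ℝ (a i) x + b i) 0 := by
  obtain ⟨m, c, g, rfl⟩ := Submodule.mem_span_set'.mp hf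
  choose ab hab using fun i => (g i).2
  refine ⟨m, fun n hn => ?_⟩
  obtain ⟨k, rfl⟩ := Nat.exists_eq_add_of_le hn
  refine ⟨Fin.append (fun i => (ab i).1) 0, Fin.append (fun i => (ab i).2) 0,
    Fin.append c 0, fun x => ?_⟩
  simp [Fin.sum_univ_add, ← hab]

lemma abs_sub_add_mul_sub_le {x y z θ δ : ℝ} (hθ₀ : 0 ≤ θ) (hθ₁ : θ ≤ 1)
    (hy : |x - y| ≤ δ) (hz : |x - z| ≤ δ) : |x - (y + θ * (z - y))| ≤ δ := by
  rw [abs_le] at *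
  constructor <;> nlinarith

/-- The network is the piecewise-linear interpolant of `φ` at the nodes `t 0 < ⋯ < t N`, extended
by constants; the constant right tail is the invariant that makes the induction on `N` work. -/
lemma exists_mem_reluNetworks_interpolating (φ : ℝ → ℝ) {t : ℕ → ℝ} {δ : ℝ} (hδ : 0 ≤ δ)
    (N : ℕ) (ht : ∀ j < N, t j < t (j + 1))
    (hφ : ∀ j < N, ∀ u ∈ Icc (t j) (t (j + 1)), |φ u - φ (t j)| ≤ δ ∧ |φ u - φ (t (j + 1))| ≤ δ) :
    ∃ g ∈ reluNetworks ℝ,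
      (∀ u, t N ≤ u → g u = φ (t N)) ∧ ∀ u ∈ Icc (t 0) (t N), |φ u - g u| ≤ δ := by
  induction N with
  | zero =>
    refine ⟨φ (t 0) • 1, Submodule.smul_mem _ _ one_mem_reluNetworks, fun u _ => by simp,
      fun u hu => ?_⟩
    obtain rfl : u = t 0 := le_antisymm hu.2 hu.1
    simpa using hδ
  | succ N ih =>
    obtain ⟨g, hg, hg_right, hg_err⟩ :=
      ih (fun j hj => ht j (by omega)) (fun j hj => hφ j (by omega))
    have hN := ht N N.lt_succ_self
    set s := (φ (t (N + 1)) - φ (t N)) / (t (N + 1) - t N)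
    let hinge : C(ℝ, ℝ) := reluNeuron 1 (-t N) - reluNeuron 1 (-t (N + 1))
    have hg' : ∀ u, (g + s • hinge) u = g u + s * (max (u - t N) 0 - max (u - t (N + 1)) 0) :=
      fun u => by simp [hinge, sub_eq_add_neg, mul_add]
    refine ⟨g + s • hinge, Submodule.add_mem _ hg (Submodule.smul_mem _ _ (Submodule.sub_mem _
      (reluNeuron_mem_reluNetworks _ _) (reluNeuron_mem_reluNetworks _ _))), fun u hu => ?_,
      fun u hu => ?_⟩
    · have hs : s * (t (N + 1) - t N) = φ (t (N + 1)) - φ (t N) :=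
        div_mul_cancel₀ _ (sub_ne_zero.mpr hN.ne')
      rw [hg', hg_right u (by linarith), max_eq_left (by linarith), max_eq_left (by linarith)]
      linear_combination hs
    · rw [hg']
      rcases le_total u (t N) with hu' | hu'
      · rw [max_eq_right (by linarith), max_eq_right (by linarith)]
        simpa using hg_err u ⟨hu.1, hu'⟩
      · rw [hg_right u hu', max_eq_left (by linarith), max_eq_right (by linarith [hu.2]),
          sub_zero, div_mul_comm]
        obtain ⟨h₀, h₁⟩ := hφ N N.lt_succ_self u ⟨hu', hu.2⟩
        refine abs_sub_add_mul_sub_le (div_nonneg (by linarith) (by linarith)) ?_ h₀ h₁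
        exact (div_le_one (by linarith)).mpr (by linarith [hu.2])

lemma exists_mem_reluNetworks_near_on_Icc (φ : C(ℝ, ℝ)) {a b δ : ℝ} (hab : a < b)
    (hδ : 0 < δ) : ∃ g ∈ reluNetworks ℝ, ∀ u ∈ Icc a b, |φ u - g u| ≤ δ := by
  obtain ⟨η, hη, hφη⟩ := Metric.uniformContinuousOn_iff.mp
    (isCompact_Icc.uniformContinuousOn_of_continuous φ.continuous.continuousOn) δ hδ
  obtain ⟨N, hN⟩ := exists_nat_gt ((b - a) / η)
  have hN₀ : (0 : ℝ) < N := lt_trans (div_pos (sub_pos.mpr hab) hη) hN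
  set h := (b - a) / N
  have hh : 0 < h := div_pos (sub_pos.mpr hab) hN₀
  have hhη : h < η := (div_lt_iff₀ hN₀).mpr (by rw [div_lt_iff₀ hη] at hN; linarith)
  have hhN : N * h = b - a := mul_div_cancel₀ _ hN₀.ne'
  set t : ℕ → ℝ := fun j => a + j * h
  have hstep : ∀ j, t (j + 1) = t j + h := fun j => by simp only [t]; push_cast; ring
  have ht_mem : ∀ j ≤ N, t j ∈ Icc a b := fun j hj => by
    have : (j : ℝ) * h ≤ N * h := by gcongr
    exact ⟨le_add_of_nonneg_right (by positivity), by simp only [t]; linarith⟩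
  have hosc : ∀ j < N, ∀ u ∈ Icc (t j) (t (j + 1)),
      |φ u - φ (t j)| ≤ δ ∧ |φ u - φ (t (j + 1))| ≤ δ := by
    intro j hj u hu
    have htj := ht_mem j hj.le
    have htj' := ht_mem (j + 1) hj
    have hu' : u ∈ Icc a b := ⟨htj.1.trans hu.1, hu.2.trans htj'.2⟩
    rw [hstep] at hu htj' ⊢
    refine ⟨(hφη u hu' _ htj ?_).le, (hφη u hu' _ htj' ?_).le⟩ <;>
      rw [Real.dist_eq, abs_lt] <;> constructor <;> linarith [hu.1, hu.2]
  obtain ⟨g, hg, -, hg_err⟩ := exists_mem_reluNetworks_interpolating φ hδ.le N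
    (fun j _ => by rw [hstep]; linarith) hosc
  have ht_ends : t 0 = a ∧ t N = b := ⟨by simp [t], by simp only [t]; linarith⟩
  exact ⟨g, hg, by simpa only [ht_ends] using hg_err⟩

lemma exists_mem_reluNetworks_real_near {s : Set ℝ} (hs : IsCompact s) (φ : C(ℝ, ℝ)) {δ : ℝ}
    (hδ : 0 < δ) : ∃ g ∈ reluNetworks ℝ, ∀ u ∈ s, |φ u - g u| ≤ δ := by
  obtain ⟨r, hr⟩ := (Metric.isBounded_iff_subset_closedBall 0).mp hs.isBounded
  have hR : -max r 1 < max r 1 := by linarith [le_max_right r 1]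
  obtain ⟨g, hg, hφg⟩ := exists_mem_reluNetworks_near_on_Icc φ hR hδ
  refine ⟨g, hg, fun u hu => hφg u ?_⟩
  have hu' := hr hu
  rw [Real.closedBall_eq_Icc, zero_sub, zero_add] at hu'
  exact ⟨by linarith [hu'.1, le_max_left r 1], hu'.2.trans (le_max_left r 1)⟩

lemma exists_mem_reluNetworks_near_comp_inner {K : Set E} (hK : IsCompact K) (φ : C(ℝ, ℝ))
    (a : E) {δ : ℝ} (hδ : 0 < δ) : ∃ f ∈ reluNetworks E, ∀ x ∈ K, |φ (inner ℝ a x) - f x| ≤ δ := by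
  let ℓ : C(E, ℝ) := ⟨fun x => inner ℝ a x, by fun_prop⟩
  obtain ⟨g, hg, hφg⟩ := exists_mem_reluNetworks_real_near (hK.image ℓ.continuous) φ hδ
  exact ⟨g.comp ℓ, comp_inner_mem_reluNetworks hg a, fun x hx => hφg _ (mem_image_of_mem ℓ hx)⟩

noncomputable def expRidge (a : E) : C(E, ℝ) :=
  ⟨fun x => Real.exp (inner ℝ a x), by fun_prop⟩

variable (E) in
def expRidgeSubalgebra : Subalgebra ℝ C(E, ℝ) :=
  (Submodule.span ℝ (range expRidge)).toSubalgebra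
    (Submodule.subset_span ⟨0, by ext; simp [expRidge]⟩) fun f g hf hg => by
      have hfg := Submodule.mul_mem_mul hf hg
      rw [Submodule.span_mul_span] at hfg
      refine Submodule.span_le.mpr ?_ hfg
      rintro _ ⟨_, ⟨a, rfl⟩, _, ⟨b, rfl⟩, rfl⟩
      exact Submodule.subset_span ⟨a + b, by ext; simp [expRidge, inner_add_left, Real.exp_add]⟩

lemma expRidgeSubalgebra_separatesPoints : (expRidgeSubalgebra E).SeparatesPoints := by
  intro x y hxy
  refine ⟨expRidge (x - y), ⟨_, Submodule.subset_span ⟨x - y, rfl⟩, rfl⟩, ?_⟩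
  have : inner ℝ (x - y) y < inner ℝ (x - y) x := by
    rw [← sub_pos, ← inner_sub_right, real_inner_self_eq_norm_sq]
    exact pow_pos (norm_pos_iff.mpr (sub_ne_zero.mpr hxy)) 2
  simpa [expRidge] using this.ne'

theorem exists_mem_reluNetworks_near {K : Set E} (hK : IsCompact K) (g : C(E, ℝ)) {δ : ℝ}
    (hδ : 0 < δ) : ∃ f ∈ reluNetworks E, ∀ x ∈ K, |g x - f x| < δ := by
  have : CompactSpace K := isCompact_iff_compactSpace.mp hK
  let ρ : C(E, ℝ) →ₐ[ℝ] C(K, ℝ) :=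
    ContinuousMap.compRightAlgHom ℝ ℝ ⟨Subtype.val, continuous_subtype_val⟩
  let N := ((reluNetworks E).map ρ.toLinearMap).topologicalClosure
  have hspan : Submodule.span ℝ (range expRidge) ≤ N.comap ρ.toLinearMap := by
    refine Submodule.span_le.mpr ?_
    rintro _ ⟨a, rfl⟩
    refine Metric.mem_closure_iff.mpr fun ε hε => ?_
    obtain ⟨f, hf, hff⟩ :=
      exists_mem_reluNetworks_near_comp_inner hK ⟨Real.exp, by fun_prop⟩ a (half_pos hε)
    refine ⟨ρ f, ⟨f, hf, rfl⟩, lt_of_le_of_lt ?_ (half_lt_self hε)⟩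
    exact (ContinuousMap.dist_le (half_pos hε).le).mpr fun x => hff x x.2
  obtain ⟨q, hq, hqg⟩ :=
    ContinuousMap.exists_mem_subalgebra_near_continuous_of_isCompact_of_separatesPoints
      expRidgeSubalgebra_separatesPoints g hK (half_pos hδ)
  obtain ⟨_, ⟨f, hf, rfl⟩, hqf⟩ := Metric.mem_closure_iff.mp (hspan hq) (δ / 2) (half_pos hδ)
  refine ⟨f, hf, fun x hx => ?_⟩
  have hqf' := (ContinuousMap.dist_apply_le_dist (⟨x, hx⟩ : K)).trans_lt hqf
  calc |g x - f x| ≤ |g x - q x| + |q x - f x| := abs_sub_le _ _ _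
    _ < δ / 2 + δ / 2 := by
      rw [abs_sub_comm]
      exact add_lt_add (hqg x hx) hqf'
    _ = δ := add_halves δ

end ReLUNetworks

theorem aestronglyMeasurable_of_ae_continuousAt {X Y : Type*} [TopologicalSpace X]
    [MeasurableSpace X] [OpensMeasurableSpace X] [PseudoMetricSpace Y]
    [SecondCountableTopologyEither X Y] {μ : Measure X} {f : X → Y}
    (hf : ∀ᵐ x ∂μ, ContinuousAt f x) : AEStronglyMeasurable f μ := by
  rw [← Measure.restrict_eq_self_of_ae_mem hf]
  exact ContinuousOn.aestronglyMeasurable (fun x hx => ContinuousAt.continuousWithinAt hx)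
    (measurableSet_of_continuousAt f)

theorem exists_mem_integral_sq_sub_lt {X : Type*} [PseudoMetricSpace X] [MeasurableSpace X]
    [BorelSpace X] {μ : Measure X} [IsFiniteMeasure μ] {F : X → ℝ} (hF : MemLp F 2 μ)
    {S : Set C(X, ℝ)} (hS : ∀ g : C(X, ℝ), ∀ δ > 0, ∃ f ∈ S, ∀ᵐ x ∂μ, |g x - f x| ≤ δ)
    {ε : ℝ} (hε : 0 < ε) : ∃ f ∈ S, ∫ x, (F x - f x) ^ 2 ∂μ < ε := by
  obtain ⟨g, hFg, hg⟩ := (show MemLp F (ENNReal.ofReal 2) μ by simpa using hF)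
    |>.exists_boundedContinuous_integral_rpow_sub_le two_pos (div_pos hε four_pos)
  set V := μ.real univ
  set δ := √(ε / (4 * (V + 1)))
  obtain ⟨f, hf, hgf⟩ := hS g.toContinuousMap δ (by positivity)
  refine ⟨f, hf, ?_⟩
  have hFg' : ∫ x, (F x - g x) ^ 2 ∂μ ≤ ε / 4 := by
    simpa [Real.rpow_two, Real.norm_eq_abs] using hFg
  have hint : Integrable (fun x => (F x - g x) ^ 2) μ :=
    (hF.sub (by simpa using hg)).integrable_sq
  have hδV : 2 * δ ^ 2 * V < ε / 2 := by
    have hV : 0 ≤ V := measureReal_nonneg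
    rw [Real.sq_sqrt (by positivity),
      show 2 * (ε / (4 * (V + 1))) * V = ε / 2 * (V / (V + 1)) by field_simp; ring]
    exact mul_lt_of_lt_one_right (half_pos hε) ((div_lt_one (by positivity)).mpr (lt_add_one V))
  calc ∫ x, (F x - f x) ^ 2 ∂μ ≤ ∫ x, (2 * (F x - g x) ^ 2 + 2 * δ ^ 2) ∂μ := by
        refine integral_mono_of_nonneg (ae_of_all _ fun x => sq_nonneg _)
          ((hint.const_mul 2).add (integrable_const _)) (hgf.mono fun x hx => ?_)
        have : (g x - f x) ^ 2 ≤ δ ^ 2 := by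
          rw [← sq_abs]; exact pow_le_pow_left₀ (abs_nonneg _) hx 2
        dsimp only
        nlinarith [sq_nonneg (F x - g x - (g x - f x))]
    _ = 2 * ∫ x, (F x - g x) ^ 2 ∂μ + 2 * δ ^ 2 * V := by
        rw [integral_add (hint.const_mul 2) (integrable_const _), integral_const_mul,
          integral_const, smul_eq_mul]
        ring
    _ < ε := by linarith

theorem relu_network_universal_approximation_general
    (n : ℕ)
    (K : Set (EuclideanSpace ℝ (Fin n))) (hK : IsCompact K)
    (p : EuclideanSpace ℝ (Fin n) → ℝ) (hp : Continuous p) (hp0 : ∀ x, 0 ≤ p x)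
    (fstar : EuclideanSpace ℝ (Fin n) → ℝ)
    (hfb : ∃ M > (0 : ℝ), ∀ x ∈ K, |fstar x| ≤ M)
    (S : Set (EuclideanSpace ℝ (Fin n))) (hS : volume S = 0)
    (hfc : ∀ x ∈ K, x ∉ S → ContinuousAt fstar x)
    (ε : ℝ) (hε : 0 < ε) :
    ∃ nε : ℕ, ∀ n' : ℕ, nε ≤ n' →
      ∃ (a : Fin n' → EuclideanSpace ℝ (Fin n)) (b c : Fin n' → ℝ) (c₀ : ℝ),
        ∫ x in K,
            (fstar x - (c₀ + ∑ i, c i * max ((inner ℝ (a i) x : ℝ) + b i) 0)) ^ 2 * p x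
          ∂volume < ε := by
  obtain ⟨M, -, hM⟩ := hfb
  have hKm : MeasurableSet K := hK.isClosed.measurableSet
  let μ := (volume.restrict K).withDensity fun x => ENNReal.ofReal (p x)
  have : IsFiniteMeasure μ :=
    isFiniteMeasure_withDensity_ofReal (hp.continuousOn.integrableOn_compact hK).hasFiniteIntegral
  have hμ : μ ≪ volume.restrict K := withDensity_absolutelyContinuous _ _
  have hμK : ∀ᵐ x ∂μ, x ∈ K := hμ.ae_le (ae_restrict_mem hKm)
  have hF : MemLp fstar 2 μ := by
    refine .of_bound (aestronglyMeasurable_of_ae_continuousAt (hμ.ae_le ?_)) M (hμK.mono hM)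
    filter_upwards [ae_restrict_mem hKm, ae_restrict_of_ae (measure_eq_zero_iff_ae_notMem.mp hS)]
      with x hxK hxS using hfc x hxK hxS
  obtain ⟨f, hf, hfε⟩ := exists_mem_integral_sq_sub_lt hF
    (S := reluNetworks (EuclideanSpace ℝ (Fin n))) (fun g δ hδ => by
      obtain ⟨f, hf, hgf⟩ := exists_mem_reluNetworks_near hK g hδ
      exact ⟨f, hf, hμK.mono fun x hx => (hgf x hx).le⟩) hε
  have hweight : ∫ x, (fstar x - f x) ^ 2 ∂μ = ∫ x in K, (fstar x - f x) ^ 2 * p x := by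
    rw [integral_withDensity_eq_integral_toReal_smul hp.measurable.ennreal_ofReal
      (ae_of_all _ fun _ => ENNReal.ofReal_lt_top)]
    simp [ENNReal.toReal_ofReal (hp0 _), mul_comm]
  obtain ⟨m, hm⟩ := exists_eq_sum_reluNeuron hf
  refine ⟨m, fun n' hn' => ?_⟩
  obtain ⟨a, b, c, hf_eq⟩ := hm n' hn'
  -- constants are neurons (`reluNeuron 0 1 = 1`), so the output bias is not needed
  refine ⟨a, b, c, 0, ?_⟩
  simpa only [zero_add, ← hf_eq, ← hweight] using hfε

/-- **Theorem 2 (universal approximation of the a.e.-continuous load–solution mapping).**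
Let `K ⊆ ℝ^n` be compact, `p` a continuous nonnegative density on `K`, and `f*` bounded
on `K` and continuous at every point of `K` except on a set of Lebesgue measure zero.
Then for every `ε > 0` there is an `n_ε` such that for every `n' ≥ n_ε` some
one-hidden-layer ReLU network `f(x) = c₀ + ∑ i, cᵢ · ReLU(⟨aᵢ, x⟩ + bᵢ)` with `n'`
neurons satisfies `∫_K (f*(x) - f(x))² p(x) dx < ε`. -/
theorem relu_network_universal_approximation
    (n : ℕ) (hn : 1 ≤ n)
    (K : Set (EuclideanSpace ℝ (Fin n))) (hK : IsCompact K)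
    (p : EuclideanSpace ℝ (Fin n) → ℝ) (hp : Continuous p) (hp0 : ∀ x, 0 ≤ p x)
    (hp1 : ∫ x in K, p x ∂volume = 1)
    (fstar : EuclideanSpace ℝ (Fin n) → ℝ)
    (hfb : ∃ M > (0 : ℝ), ∀ x ∈ K, |fstar x| ≤ M)
    (S : Set (EuclideanSpace ℝ (Fin n))) (hS : volume S = 0)
    (hfc : ∀ x ∈ K, x ∉ S → ContinuousAt fstar x)
    (ε : ℝ) (hε : 0 < ε) :
    ∃ nε : ℕ, ∀ n' : ℕ, nε ≤ n' →
      ∃ (a : Fin n' → EuclideanSpace ℝ (Fin n)) (b c : Fin n' → ℝ) (c₀ : ℝ),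
        ∫ x in K,
            (fstar x - (c₀ + ∑ i, c i * max ((inner ℝ (a i) x : ℝ) + b i) 0)) ^ 2 * p x
          ∂volume < ε :=
  relu_network_universal_approximation_general n K hK p hp hp0 fstar hfb S hS hfc ε hε
end
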